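/- arXiv:1805.06018 — 3 statements merged into one kernel-verified Lean document; each statement's English description precedes it below -/
import Mathlib

section
/- If S and T are boxes (Cartesian products of integer intervals) in Z^d, and S is at least as large as T in each coordinate direction (i.e., s_max^i - s_min^i ≥ t_max^i - t_min^i for all i), then the Minkowski sum S + T equals the Minkowski sum of S with the set of corners of T. -/
open Pointwise

/-- A box in `ℤ^d`: the Cartesian product of integer intervals `[a i, b i]`. -/
def box {d : ℕ} (a b : Fin d → ℤ) : Set (Fin d → ℤ) :=
  {x | ∀ i, a i ≤ x i ∧ x i ≤ b i}

/-- The set of corners of the box with min point `a` and max point `b`. -/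
def corners {d : ℕ} (a b : Fin d → ℤ) : Set (Fin d → ℤ) :=
  {x | ∀ i, x i = a i ∨ x i = b i}

/-- If `S` and `T` are boxes and `S` is at least as large as `T` in every coordinate
direction, then the Minkowski sum `S + T` equals `S + corners T`. -/
theorem box_minkowski_sum_corners {d : ℕ} (a b c e : Fin d → ℤ)
    (hab : ∀ i, a i ≤ b i) (hce : ∀ i, c i ≤ e i)
    (hsize : ∀ i, e i - c i ≤ b i - a i) :
    box a b + box c e = box a b + corners c e := by
  apply Set.Subset.antisymm
  · rintro z ⟨x, hx, y, hy, rfl⟩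
    refine ⟨fun i => if x i + y i ≤ b i + c i then x i + y i - c i else x i + y i - e i,
      fun i => ?_,
      fun i => if x i + y i ≤ b i + c i then c i else e i,
      fun i => ?_, ?_⟩
    · by_cases h : x i + y i ≤ b i + c i <;> simp only [h, if_pos, if_neg, if_true, if_false]
      · constructor
        · have := (hx i).1; have := (hy i).1; omega
        · omega
      · constructor
        · have := hsize i; omega
        · have := (hx i).2; have := (hy i).2; omega
    · by_cases h : x i + y i ≤ b i + c i <;> simp [h]
    · funext i
      by_cases h : x i + y i ≤ b i + c i <;> simp [h]
  · rintro z ⟨x, hx, y, hy, rfl⟩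
    refine ⟨x, hx, y, fun i => ?_, rfl⟩
    rcases hy i with h | h <;> rw [h]
    · exact ⟨le_refl _, hce i⟩
    · exact ⟨hce i, le_refl _⟩
end

section
/- Let Ω ⊆ Z^d be finite and let U ⊆ Ω be a union of boxes C_1, ..., C_m each contained in Ω. Then the Minkowski difference Ω - U equals the union over i of (Ω - corners(C_i)). -/
open Pointwise

/-!
Write an element of `Ω - C`, for a box `C = [a, b] ⊆ Ω`, as `w - u` with `w ∈ Ω`, `u ∈ C`.
Coordinate by coordinate it is also `(w - u + c) - c`, where `c = a` if `w - u ≥ 0` and `c = b`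
otherwise: this choice keeps `w - u + c` between `c` and `w`, hence in `Ω`. So
`Ω - C = Ω - corners C` for each box, and the difference distributes over the union.
-/

open Set

section Interval

variable {α : Type*} [AddCommGroup α] [LinearOrder α] [IsOrderedAddMonoid α]

theorem Icc_sub_Icc_eq_Icc_sub_pair {o O a b : α} (hoa : o ≤ a) (hab : a ≤ b) (hbO : b ≤ O) :
    Icc o O - Icc a b = Icc o O - {a, b} := by
  refine (sub_subset_sub_left ?_).antisymm' ?_
  · rintro c (rfl | rfl)
    exacts [left_mem_Icc.2 hab, right_mem_Icc.2 hab]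
  rintro _ ⟨w, ⟨how, hwO⟩, u, ⟨hau, hub⟩, rfl⟩
  rcases le_or_gt 0 (w - u) with h | h
  · refine ⟨w - u + a, ⟨?_, ?_⟩, a, .inl rfl, add_sub_cancel_right _ _⟩
    · exact hoa.trans (le_add_of_nonneg_left h)
    · calc w - u + a ≤ w - u + u := add_le_add_right hau _
        _ = w := sub_add_cancel w u
        _ ≤ O := hwO
  · refine ⟨w - u + b, ⟨?_, ?_⟩, b, .inr rfl, add_sub_cancel_right _ _⟩
    · calc o ≤ w := how
        _ = w - u + u := (sub_add_cancel w u).symm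
        _ ≤ w - u + b := add_le_add_right hub _
    · exact (add_le_of_nonpos_left h.le).trans hbO

end Interval

theorem univ_pi_sub_univ_pi {ι : Type*} {α : ι → Type*} [∀ i, Sub (α i)]
    (s t : ∀ i, Set (α i)) : univ.pi s - univ.pi t = univ.pi (s - t) := by
  ext x
  simp only [mem_sub, mem_univ_pi, Pi.sub_apply]
  constructor
  · rintro ⟨y, hy, z, hz, rfl⟩ i
    exact ⟨y i, hy i, z i, hz i, rfl⟩
  · intro hx
    choose y hy z hz hyz using hx
    exact ⟨y, hy, z, hz, funext hyz⟩

section Box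

variable {d : ℕ}

theorem box_eq_Icc (a b : Fin d → ℤ) : box a b = Icc a b := by
  ext x
  simp only [box, mem_ofPred_eq, mem_Icc, Pi.le_def, forall_and]

theorem box_eq_univ_pi (a b : Fin d → ℤ) : box a b = univ.pi fun i => Icc (a i) (b i) := by
  ext x
  simp only [box, mem_ofPred_eq, mem_univ_pi, mem_Icc]

theorem corners_eq_univ_pi (a b : Fin d → ℤ) : corners a b = univ.pi fun i => {a i, b i} := by
  ext x
  simp only [corners, mem_ofPred_eq, mem_univ_pi, mem_insert_iff, mem_singleton_iff]

theorem box_sub_box_eq_box_sub_corners {o O a b : Fin d → ℤ} (hab : a ≤ b)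
    (hsub : box a b ⊆ box o O) : box o O - box a b = box o O - corners a b := by
  rw [box_eq_Icc a, box_eq_Icc o, Icc_subset_Icc_iff hab] at hsub
  simp only [box_eq_univ_pi, corners_eq_univ_pi, univ_pi_sub_univ_pi]
  congr 1
  funext i
  exact Icc_sub_Icc_eq_Icc_sub_pair (hsub.1 i) (hab i) (hsub.2 i)

end Box

/-- If `U ⊆ Ω` is a union of boxes `C_1, …, C_m`, each contained in the box `Ω`, then
the Minkowski difference `Ω - U` equals the union over `i` of `Ω - corners(C_i)`. -/
theorem minkowski_diff_union_boxes {d m : ℕ} (omin omax : Fin d → ℤ)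
    (a b : Fin m → Fin d → ℤ)
    (hab : ∀ i t, a i t ≤ b i t)
    (hsub : ∀ i, box (a i) (b i) ⊆ box omin omax) :
    box omin omax - (⋃ i, box (a i) (b i))
      = ⋃ i, (box omin omax - corners (a i) (b i)) := by
  rw [sub_iUnion]
  exact iUnion_congr fun i => box_sub_box_eq_box_sub_corners (hab i) (hsub i)
end

section
/- Let the sample points p_k be the corners of leaf cells of a binary tree of boxes partitioning a box Ω, let U_k be the union of leaf cells containing p_k, and let nbrs(k) be the indices j such that p_j and p_k share a leaf cell. Then Ω − U_k = ∪_{j ∈ nbrs(k)} (Ω − p_j). -/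
open Pointwise

lemma corners_subset_box {d : ℕ} {a b : Fin d → ℤ} (hab : ∀ t, a t ≤ b t) :
    corners a b ⊆ box a b := by
  intro x hx t
  rcases hx t with h | h <;> simp [h, hab t]

/-- Let the sample points `p_j` be the corners of the leaf cells (boxes `C_i ⊆ Ω`),
let `U_k` be the union of the leaf cells containing `p_k`, and say `j ∈ nbrs(k)` iff
`p_j` and `p_k` share a leaf cell. If every corner of a leaf cell is a sample point
and every sample point lying in a leaf cell is a corner of it, then
`Ω − U_k = ∪_{j ∈ nbrs(k)} (Ω − p_j)`. -/
theorem minkowski_diff_blocky_neighborhood {d m r : ℕ}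
    (omin omax : Fin d → ℤ)
    (a b : Fin m → Fin d → ℤ)
    (hab : ∀ i t, a i t ≤ b i t)
    (hcell : ∀ i, box (a i) (b i) ⊆ box omin omax)
    (p : Fin r → Fin d → ℤ)
    (hcorner_sample : ∀ i, corners (a i) (b i) ⊆ Set.range p)
    (hsample_corner : ∀ j i, p j ∈ box (a i) (b i) → p j ∈ corners (a i) (b i))
    (k : Fin r) :
    box omin omax - (⋃ i ∈ {i : Fin m | p k ∈ box (a i) (b i)}, box (a i) (b i))
      = ⋃ j ∈ {j : Fin r | ∃ i, p k ∈ box (a i) (b i) ∧ p j ∈ box (a i) (b i)},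
          ((fun ω => ω - p j) '' box omin omax) := by
  ext x
  simp only [Set.mem_sub, Set.mem_iUnion, Set.mem_image, Set.mem_setOf_eq]
  constructor
  · rintro ⟨ω, hω, u, hu, rfl⟩
    obtain ⟨i, hki, hui⟩ : ∃ i, p k ∈ box (a i) (b i) ∧ u ∈ box (a i) (b i) := by
      simpa using hu
    -- the corner of cell i chosen coordinatewise
    set c : Fin d → ℤ := fun t => if omin t ≤ ω t - u t + a i t then a i t else b i t with hc
    have hcc : c ∈ corners (a i) (b i) := by
      intro t; by_cases h : omin t ≤ ω t - u t + a i t <;> simp [hc, h]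
    have haΩ : a i ∈ box omin omax := hcell i (fun t => ⟨le_refl _, hab i t⟩)
    have hbΩ : b i ∈ box omin omax := hcell i (fun t => ⟨hab i t, le_refl _⟩)
    have hω' : (fun t => ω t - u t + c t) ∈ box omin omax := by
      intro t
      by_cases h : omin t ≤ ω t - u t + a i t
      · simp only [hc, if_pos h]
        refine ⟨h, ?_⟩
        have := (hui t).1
        have := (hω t).2
        omega
      · simp only [hc, if_neg h]
        constructor
        · have := (hui t).2
          have := (hω t).1
          omega
        · have h1 : ω t - u t + a i t < omin t := lt_of_not_ge h
          have h2 : omin t ≤ a i t := (haΩ t).1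
          have := (hbΩ t).2
          omega
    obtain ⟨j, hj⟩ := hcorner_sample i hcc
    refine ⟨j, ⟨i, hki, ?_⟩, fun t => ω t - u t + c t, hω', ?_⟩
    · rw [hj]; exact corners_subset_box (hab i) hcc
    · rw [hj]; funext t; simp
  · rintro ⟨j, ⟨i, hki, hji⟩, ω, hω, rfl⟩
    exact ⟨ω, hω, p j, by simpa using ⟨i, hki, hji⟩, rfl⟩
end
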